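/- If P is an s×s real matrix whose eigenvalues are 1, λ₂, …, λ_s with |λ_i| < 1 for i = 2,…,s, and d is a vector with P^j d = 0 for all j ≥ s−1, then d lies in the range of I − P. -/

import Mathlib

open Matrix

theorem Matrix.exists_one_sub_mulVec_eq_of_pow_mulVec_eq_zero {ι R : Type*} [Fintype ι]
    [DecidableEq ι] [CommRing R] (A : Matrix ι ι R) (v : ι → R) {k : ℕ}
    (hk : (A ^ k) *ᵥ v = 0) : ∃ x : ι → R, (1 - A) *ᵥ x = v := by
  refine ⟨(∑ j ∈ Finset.range k, A ^ j) *ᵥ v, ?_⟩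
  rw [mulVec_mulVec, mul_neg_geom_sum, sub_mulVec, one_mulVec, hk, sub_zero]

theorem stmt_0_general {s : ℕ} (P : Matrix (Fin s) (Fin s) ℝ) (d : Fin s → ℝ)
    (hpow : ∀ j : ℕ, s - 1 ≤ j → (P ^ j) *ᵥ d = 0) :
    ∃ x : Fin s → ℝ, ((1 : Matrix (Fin s) (Fin s) ℝ) - P) *ᵥ x = d :=
  P.exists_one_sub_mulVec_eq_of_pow_mulVec_eq_zero d (hpow (s - 1) le_rfl)

/-- If P is an s×s real matrix whose eigenvalues are 1, λ₂, …, λ_s with |λ_i| < 1,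
and d is a vector with P^j d = 0 for all j ≥ s−1, then d lies in the range of I − P. -/
theorem stmt_0 {s : ℕ} (P : Matrix (Fin s) (Fin s) ℝ) (d : Fin s → ℝ)
    (lam : Multiset ℂ)
    (heig : (P.map (Complex.ofReal)).charpoly.roots = 1 ::ₘ lam)
    (hlam : ∀ μ ∈ lam, ‖μ‖ < 1)
    (hpow : ∀ j : ℕ, s - 1 ≤ j → (P ^ j) *ᵥ d = 0) :
    ∃ x : Fin s → ℝ, ((1 : Matrix (Fin s) (Fin s) ℝ) - P) *ᵥ x = d :=
  stmt_0_general P d hpow
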